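/- Let Σ = [[0, I],[I, 0]] ∈ ℝ^{2n×2n} and suppose W_B, W_C ∈ ℝ^{n×2n} satisfy W_B Σ W_Bᵀ = 0, W_C Σ W_Cᵀ = 0, W_C Σ W_Bᵀ = I. Then for every vector (f, e) ∈ ℝ^{2n}, writing u = W_B (f,e) and y = W_C (f,e), one has fᵀ e = uᵀ y. -/

import Mathlib

open Matrix

theorem stmt_3 (n : ℕ)
    (WB WC : Matrix (Fin n) (Fin n ⊕ Fin n) ℝ)
    (Sig : Matrix (Fin n ⊕ Fin n) (Fin n ⊕ Fin n) ℝ)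
    (hSig : Sig = Matrix.fromBlocks 0 1 1 0)
    (hB : WB * Sig * WBᵀ = 0)
    (hC : WC * Sig * WCᵀ = 0)
    (hCB : WC * Sig * WBᵀ = 1) :
    ∀ f e : Fin n → ℝ,
      (WB *ᵥ Sum.elim f e) ⬝ᵥ (WC *ᵥ Sum.elim f e) = f ⬝ᵥ e := by
  have hSS : Sig * Sig = 1 := by
    subst hSig
    simp [Matrix.fromBlocks_multiply, ← Matrix.fromBlocks_one]
  have hSigT : Sigᵀ = Sig := by
    subst hSig
    simp [Matrix.fromBlocks_transpose]
  set W : Matrix (Fin n ⊕ Fin n) (Fin n ⊕ Fin n) ℝ := Matrix.fromRows WB WC with hW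
  have hBC : WB * Sig * WCᵀ = 1 := by
    have := congrArg Matrix.transpose hCB
    simpa [Matrix.transpose_mul, hSigT, Matrix.mul_assoc] using this
  have hWSW : W * Sig * Wᵀ = Sig := by
    rw [hW, Matrix.transpose_fromRows, Matrix.fromRows_mul,
      Matrix.fromRows_mul_fromCols, hB, hC, hCB, hBC, hSig]
  have hright : W * (Sig * Wᵀ * Sig) = 1 := by
    calc W * (Sig * Wᵀ * Sig) = (W * Sig * Wᵀ) * Sig := by
          simp only [Matrix.mul_assoc]
    _ = 1 := by rw [hWSW, hSS]
  have hleft : (Sig * Wᵀ * Sig) * W = 1 := mul_eq_one_comm.mp hright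
  have hkey : Wᵀ * Sig * W = Sig := by
    have h2 : Sig * (Sig * Wᵀ * Sig * W) = Sig := by rw [hleft, Matrix.mul_one]
    calc Wᵀ * Sig * W = Sig * Sig * Wᵀ * Sig * W := by rw [hSS, Matrix.one_mul]
    _ = Sig * (Sig * Wᵀ * Sig * W) := by simp only [Matrix.mul_assoc]
    _ = Sig := h2
  have hsum : WBᵀ * WC + WCᵀ * WB = Sig := by
    have hSW : Sig * W = Matrix.fromRows WC WB := by
      rw [hW, hSig, Matrix.fromBlocks_mul_fromRows]
      simp
    have : Wᵀ * Sig * W = WBᵀ * WC + WCᵀ * WB := by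
      rw [Matrix.mul_assoc, hSW, hW, Matrix.transpose_fromRows,
        Matrix.fromCols_mul_fromRows]
    rw [← this, hkey]
  intro f e
  set x : (Fin n ⊕ Fin n) → ℝ := Sum.elim f e with hx
  have quad : ∀ A : Matrix (Fin n) (Fin n ⊕ Fin n) ℝ, ∀ B : Matrix (Fin n) (Fin n ⊕ Fin n) ℝ,
      (A *ᵥ x) ⬝ᵥ (B *ᵥ x) = x ⬝ᵥ ((Aᵀ * B) *ᵥ x) := by
    intro A B
    rw [Matrix.dotProduct_mulVec, Matrix.vecMul_mulVec, ← Matrix.dotProduct_mulVec]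
  have hsym : (WB *ᵥ x) ⬝ᵥ (WC *ᵥ x) = (WC *ᵥ x) ⬝ᵥ (WB *ᵥ x) := dotProduct_comm _ _
  have hSx : x ⬝ᵥ (Sig *ᵥ x) = 2 * (f ⬝ᵥ e) := by
    rw [hSig, Matrix.fromBlocks_mulVec, hx]
    simp [sumElim_dotProduct_sumElim, dotProduct_comm e f]
    ring
  have h2 : 2 * ((WB *ᵥ x) ⬝ᵥ (WC *ᵥ x)) = 2 * (f ⬝ᵥ e) := by
    rw [← hSx, ← hsum, Matrix.add_mulVec, dotProduct_add, ← quad, ← quad, ← hsym]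
    ring
  linarith
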